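/- Let H be a complex Hilbert space, let P be a partition of H, and let r be a closed subspace of H. Then the subspace m = ⨆{ p ∈ P : p is not orthogonal to r } is the least multicell of P containing r: r ≤ m, and for every subset C ⊆ P with r ≤ ⨆C one has m ≤ ⨆C. -/

import Mathlib

/-!
Let `M` be the set of cells not orthogonal to `r` and `A` the closure of `⨆ M`. The other cells
span a subspace `B` orthogonal to both `A` and `r`, and `A ⊔ B` is dense, so in a Hilbert space
`Bᗮ = A`; hence `r ≤ A`. Conversely, a cell outside `C` is orthogonal to the closure of `⨆ C`,
so if `r` lies in that closure, every cell of `M` belongs to `C`.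
-/

variable {H : Type*} [NormedAddCommGroup H] [InnerProductSpace ℂ H]

/-- Two subspaces of a complex inner product space are orthogonal when every vector of
one is orthogonal to every vector of the other. -/
def Orth (p q : Submodule ℂ H) : Prop :=
  ∀ x ∈ p, ∀ y ∈ q, @inner ℂ H _ x y = 0

/-- A partition of `H` is a set of nonzero closed subspaces of `H` that are pairwise
orthogonal and whose supremum in the complete lattice of closed subspaces of `H`
(i.e. the topological closure of the submodule supremum) is all of `H`. -/
def IsPartition (P : Set (Submodule ℂ H)) : Prop :=
  (∀ p ∈ P, p ≠ ⊥) ∧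
  (∀ p ∈ P, IsClosed (p : Set H)) ∧
  (∀ p ∈ P, ∀ q ∈ P, p ≠ q → Orth p q) ∧
  (sSup P).topologicalClosure = ⊤

/-- `P₁` refines `P₂` when every cell of `P₁` is contained in some cell of `P₂`. -/
def Refines (P₁ P₂ : Set (Submodule ℂ H)) : Prop :=
  ∀ p ∈ P₁, ∃ q ∈ P₂, p ≤ q

/-- A multicell of a partition `P` is the supremum (in the lattice of closed subspaces)
of a possibly empty subset of `P`. -/
def IsMulticell (P : Set (Submodule ℂ H)) (m : Submodule ℂ H) : Prop :=
  ∃ C ⊆ P, m = (sSup C).topologicalClosure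

namespace Submodule

variable {𝕜 E : Type*} [RCLike 𝕜] [NormedAddCommGroup E] [InnerProductSpace 𝕜 E]

theorem isOrtho_topologicalClosure_right {U V : Submodule 𝕜 E} :
    U ⟂ V.topologicalClosure ↔ U ⟂ V := by
  rw [isOrtho_iff_le, isOrtho_iff_le, orthogonal_closure]

theorem IsOrtho.orthogonal_eq_of_orthogonal_sup_eq_bot {A B : Submodule 𝕜 E}
    [A.HasOrthogonalProjection] (hAB : A ⟂ B) (hdense : (A ⊔ B)ᗮ = ⊥) : Bᗮ = A := by
  rw [← sup_orthogonal_inf_of_hasOrthogonalProjection hAB.le, inf_orthogonal, hdense,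
    sup_bot_eq]

end Submodule

open Submodule

theorem orth_iff_isOrtho {p q : Submodule ℂ H} : Orth p q ↔ p ⟂ q :=
  isOrtho_iff_inner_eq.symm

theorem isOrtho_closure_sSup_of_pairwise {P C : Set (Submodule ℂ H)} (hP : P.Pairwise Orth)
    (hC : C ⊆ P) {p : Submodule ℂ H} (hp : p ∈ P) (hpC : p ∉ C) :
    p ⟂ (sSup C).topologicalClosure := by
  rw [isOrtho_topologicalClosure_right, isOrtho_sSup_right]
  intro q hq
  exact orth_iff_isOrtho.mp <| hP hp (hC hq) fun hpq => hpC (hpq ▸ hq)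

namespace IsPartition

variable {P : Set (Submodule ℂ H)}

theorem pairwise_orth (hP : IsPartition P) : P.Pairwise Orth :=
  hP.2.2.1

theorem orthogonal_sSup_eq_bot [CompleteSpace H] (hP : IsPartition P) : (sSup P)ᗮ = ⊥ :=
  topologicalClosure_eq_top_iff.mp hP.2.2.2

theorem le_closure_sSup_of_isOrtho [CompleteSpace H] (hP : IsPartition P)
    {S : Set (Submodule ℂ H)} (hS : S ⊆ P) {r : Submodule ℂ H}
    (hr : ∀ p ∈ P \ S, p ⟂ r) : r ≤ (sSup S).topologicalClosure := by
  have : CompleteSpace (sSup S).topologicalClosure :=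
    (sSup S).isClosed_topologicalClosure.completeSpace_coe
  have hAB : (sSup S).topologicalClosure ⟂ sSup (P \ S) :=
    isOrtho_sSup_left.mpr (fun p hp =>
      isOrtho_closure_sSup_of_pairwise hP.pairwise_orth hS hp.1 hp.2) |>.symm
  have hdense : ((sSup S).topologicalClosure ⊔ sSup (P \ S))ᗮ = ⊥ := by
    refine eq_bot_iff.mpr (hP.orthogonal_sSup_eq_bot ▸ orthogonal_le (sSup_le fun p hp => ?_))
    by_cases hpS : p ∈ S
    · exact le_sup_of_le_left ((le_sSup hpS).trans (le_topologicalClosure _))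
    · exact le_sup_of_le_right (le_sSup ⟨hp, hpS⟩)
  rw [← hAB.orthogonal_eq_of_orthogonal_sup_eq_bot hdense]
  exact (isOrtho_sSup_left.mpr hr).ge

theorem mem_of_le_closure_sSup_of_not_orth (hP : IsPartition P) {C : Set (Submodule ℂ H)}
    (hC : C ⊆ P) {r : Submodule ℂ H} (hrC : r ≤ (sSup C).topologicalClosure)
    {p : Submodule ℂ H} (hp : p ∈ P) (hpr : ¬ Orth p r) : p ∈ C := by
  by_contra hpC
  exact hpr <| orth_iff_isOrtho.mpr <|
    (isOrtho_closure_sSup_of_pairwise hP.pairwise_orth hC hp hpC).mono_right hrC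

end IsPartition

theorem least_multicell_containing_general [CompleteSpace H]
    (P : Set (Submodule ℂ H)) (hP : IsPartition P)
    (r : Submodule ℂ H) :
    r ≤ (sSup {p ∈ P | ¬ Orth p r}).topologicalClosure ∧
      ∀ C ⊆ P, r ≤ (sSup C).topologicalClosure →
        (sSup {p ∈ P | ¬ Orth p r}).topologicalClosure ≤ (sSup C).topologicalClosure := by
  refine ⟨hP.le_closure_sSup_of_isOrtho (Set.sep_subset _ _) fun p hp => ?_,
    fun C hC hrC => topologicalClosure_mono (sSup_le_sSup fun p hp => ?_)⟩
  · exact orth_iff_isOrtho.mp (not_not.mp fun hpr => hp.2 ⟨hp.1, hpr⟩)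
  · exact hP.mem_of_le_closure_sSup_of_not_orth hC hrC hp.1 hp.2

/-- Let `H` be a complex Hilbert space, `P` a partition of `H`, and `r` a
closed subspace of `H`.  Then `m = ⨆ {p ∈ P | p is not orthogonal to r}` (taken in the lattice
of closed subspaces) is the least multicell of `P` containing `r`: one has `r ≤ m`, and for
every subset `C ⊆ P` with `r ≤ ⨆ C` one has `m ≤ ⨆ C`. -/
theorem least_multicell_containing [CompleteSpace H]
    (P : Set (Submodule ℂ H)) (hP : IsPartition P)
    (r : Submodule ℂ H) (hr : IsClosed (r : Set H)) :
    r ≤ (sSup {p ∈ P | ¬ Orth p r}).topologicalClosure ∧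
      ∀ C ⊆ P, r ≤ (sSup C).topologicalClosure →
        (sSup {p ∈ P | ¬ Orth p r}).topologicalClosure ≤ (sSup C).topologicalClosure :=
  least_multicell_containing_general P hP r
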